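/- For every k ≥ 1: the map T^{S(k−1)} is injective on D_k; T^{S(k−1)}(D_k) = D_{k−1} ∪ D_{k+1} with D_{k−1} ∩ D_{k+1} = {0}; hence λ^{S(k−1)} |D_k| = |D_{k−1}| + |D_{k+1}|. Equivalently, setting ν_k := |D_k|/|D_{k+1}|, one has λ^{S(k−1)} = ν_{k−1} + 1/ν_k. -/

import Mathlib

open MeasureTheory Filter Set

noncomputable def intervalLength (A : Set ℝ) : ℝ := (MeasureTheory.volume A).toReal

/-!
On each side of the turning point the tent map is affine with slope `±λ`. For `1 ≤ j < S(k-1)`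
the points `c_j` and `c_{S(k)+j}` lie on the same side of `0`, so by induction `T^j` is affine on
`D_k = [0, c_{S(k)}]` with slope `±λ^j`. At `j = S(k-1)` the endpoints of the image,
`c_{S(k-1)}` and `c_{S(k)+S(k-1)} = c_{S(k+1)}`, lie on opposite sides of `0`, so the image
splits as `D_{k-1} ∪ D_{k+1}` with the two pieces meeting only at `0`, and comparing lengths
gives `λ^{S(k-1)} |D_k| = |D_{k-1}| + |D_{k+1}|`.
-/

def tent (lam x : ℝ) : ℝ := lam * (1 - |x|) - 1

lemma exists_abs_eq_mul_on_uIcc {p q : ℝ} (h : (0 ≤ p ∧ 0 ≤ q) ∨ (p ≤ 0 ∧ q ≤ 0)) :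
    ∃ σ : ℝ, |σ| = 1 ∧ ∀ y ∈ uIcc p q, |y| = σ * y := by
  rcases h with ⟨hp, hq⟩ | ⟨hp, hq⟩
  · exact ⟨1, abs_one, fun y hy => by rw [one_mul, abs_of_nonneg ((le_inf hp hq).trans hy.1)]⟩
  · exact ⟨-1, by simp, fun y hy => by rw [neg_one_mul, abs_of_nonpos (hy.2.trans (sup_le hp hq))]⟩

lemma image_affine_uIcc_zero (a s t : ℝ) :
    (fun x => a + s * x) '' uIcc 0 t = uIcc a (a + s * t) := by
  have : (fun x => a + s * x) = (a + ·) ∘ (s * ·) := rfl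
  rw [this, image_comp, image_const_mul_uIcc, image_const_add_uIcc, mul_zero, add_zero]

theorem exists_iterate_tent_eqOn_affine {lam t : ℝ} (hlam : 0 ≤ lam) {n : ℕ}
    (hside : ∀ j < n, (0 ≤ (tent lam)^[j] 0 ∧ 0 ≤ (tent lam)^[j] t) ∨
      ((tent lam)^[j] 0 ≤ 0 ∧ (tent lam)^[j] t ≤ 0)) :
    ∃ s : ℝ, |s| = lam ^ n ∧
      EqOn (tent lam)^[n] (fun x => (tent lam)^[n] 0 + s * x) (uIcc 0 t) := by
  induction n with
  | zero => exact ⟨1, by simp, fun x _ => by simp⟩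
  | succ n ih =>
    obtain ⟨s, hs, hfx⟩ := ih fun j hj => hside j (by omega)
    have hend : (tent lam)^[n] t = (tent lam)^[n] 0 + s * t := hfx right_mem_uIcc
    obtain ⟨σ, hσ, habs⟩ := exists_abs_eq_mul_on_uIcc (hend ▸ hside n n.lt_succ_self)
    refine ⟨-(lam * σ * s), ?_, fun x hx => ?_⟩
    · rw [abs_neg, abs_mul, abs_mul, abs_of_nonneg hlam, hσ, hs, pow_succ]
      ring
    · have hy := habs _ (image_affine_uIcc_zero _ s t ▸ mem_image_of_mem _ hx)
      have h0 := habs _ left_mem_uIcc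
      simp only [Function.iterate_succ_apply', hfx hx, tent, hy, h0]
      ring

lemma uIcc_eq_uIcc_zero_union_of_mul_nonpos {a b : ℝ} (h : a * b ≤ 0) :
    uIcc a b = uIcc 0 a ∪ uIcc 0 b := by
  rcases mul_nonpos_iff.1 h with ⟨ha, hb⟩ | ⟨ha, hb⟩
  · rw [uIcc_of_ge (hb.trans ha), uIcc_of_le ha, uIcc_of_ge hb, union_comm,
      Icc_union_Icc_eq_Icc hb ha]
  · rw [uIcc_of_le (ha.trans hb), uIcc_of_ge ha, uIcc_of_le hb, Icc_union_Icc_eq_Icc ha hb]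

lemma uIcc_zero_inter_uIcc_zero_of_mul_nonpos {a b : ℝ} (h : a * b ≤ 0) :
    uIcc 0 a ∩ uIcc 0 b = {0} := by
  rcases mul_nonpos_iff.1 h with ⟨ha, hb⟩ | ⟨ha, hb⟩
  · rw [uIcc_of_le ha, uIcc_of_ge hb, inter_comm, Icc_inter_Icc_eq_singleton hb ha]
  · rw [uIcc_of_ge ha, uIcc_of_le hb, Icc_inter_Icc_eq_singleton ha hb]

lemma abs_sub_eq_abs_add_abs_of_mul_nonpos {a b : ℝ} (h : a * b ≤ 0) :
    |b - a| = |a| + |b| := by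
  rw [sub_eq_add_neg, (abs_add_eq_add_abs_iff b (-a)).2, abs_neg, add_comm]
  rcases mul_nonpos_iff.1 h with ⟨ha, hb⟩ | ⟨ha, hb⟩
  · exact Or.inr ⟨hb, neg_nonpos.2 ha⟩
  · exact Or.inl ⟨hb, neg_nonneg.2 ha⟩

lemma intervalLength_uIcc_zero (x : ℝ) : intervalLength (uIcc 0 x) = |x| := by
  rw [intervalLength, Real.volume_interval, sub_zero, ENNReal.toReal_ofReal (abs_nonneg _)]

section FibonacciIndex

variable {S : ℤ → ℕ} (hSrec : ∀ k : ℤ, 0 ≤ k → S k = S (k - 1) + S (k - 2))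
include hSrec

lemma fibonacci_add_one {k : ℤ} (hk : -1 ≤ k) : S (k + 1) = S k + S (k - 1) := by
  simpa [show k + 1 - 2 = k - 1 by ring] using hSrec (k + 1) (by omega)

lemma one_le_fibonacci (hSm1 : S (-1) = 1) {m : ℤ} (hm : -1 ≤ m) : 1 ≤ S m := by
  induction m, hm using Int.leInduction with
  | base => exact hSm1.ge
  | succ n hn ih => rw [fibonacci_add_one hSrec hn]; omega

end FibonacciIndex

lemma sameSide_of_pos_iff_pos {a b : ℝ} (ha : a ≠ 0) (h : 0 < b ↔ 0 < a) :
    (0 ≤ a ∧ 0 ≤ b) ∨ (a ≤ 0 ∧ b ≤ 0) := by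
  rcases ha.lt_or_gt with ha | ha
  · exact Or.inr ⟨ha.le, not_lt.1 fun hb => ha.not_gt (h.1 hb)⟩
  · exact Or.inl ⟨ha.le, (h.2 ha).le⟩

lemma mul_nonpos_of_pos_iff_neg {a b : ℝ} (ha : a ≠ 0) (h : 0 < b ↔ a < 0) : a * b ≤ 0 := by
  rcases ha.lt_or_gt with ha | ha
  · exact (mul_neg_of_neg_of_pos ha (h.2 ha)).le
  · exact mul_nonpos_of_nonneg_of_nonpos ha.le (not_lt.1 fun hb => ha.not_gt (h.1 hb))

theorem exists_iterate_tent_eqOn_affine_uIcc_fibonacci {lam : ℝ} (hlam : 0 ≤ lam) {c : ℕ → ℝ}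
    (hc : ∀ i : ℕ, c i = (tent lam)^[i] 0) (hcne : ∀ j : ℕ, 1 ≤ j → c j ≠ 0) {S : ℤ → ℕ}
    (hsame : ∀ k : ℤ, 2 ≤ k → ∀ j : ℕ, 1 ≤ j → j < S (k - 2) →
      (0 < c (S (k - 1) + j) ↔ 0 < c j))
    {k : ℤ} (hk : 1 ≤ k) :
    ∃ s : ℝ, |s| = lam ^ S (k - 1) ∧
      EqOn (tent lam)^[S (k - 1)] (fun x => c (S (k - 1)) + s * x) (uIcc 0 (c (S k))) := by
  have hc_iterate (i j : ℕ) : (tent lam)^[j] (c i) = c (i + j) := by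
    rw [hc, hc, add_comm, Function.iterate_add_apply]
  rw [hc]
  refine exists_iterate_tent_eqOn_affine hlam fun j hj => ?_
  rw [← hc, hc_iterate]
  rcases Nat.eq_zero_or_pos j with rfl | hj0
  · simpa [hc 0] using le_total 0 (c (S k))
  · refine sameSide_of_pos_iff_pos (hcne j hj0) ?_
    have := hsame (k + 1) (by omega) j hj0 (by rwa [show k + 1 - 2 = k - 1 by ring])
    rwa [add_sub_cancel_right] at this

theorem image_of_Dk_under_fibonacci_iterate_general
    (lam : ℝ) (hlam1 : 1 < lam)
    (T : ℝ → ℝ) (hT : ∀ x : ℝ, T x = lam * (1 - |x|) - 1)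
    (c : ℕ → ℝ) (hc : ∀ i : ℕ, c i = T^[i] 0)
    (S : ℤ → ℕ) (hSm1 : S (-1) = 1)
    (hSrec : ∀ k : ℤ, 0 ≤ k → S k = S (k - 1) + S (k - 2))
    (hcne : ∀ j : ℕ, 1 ≤ j → c j ≠ 0)
    (hsame : ∀ k : ℤ, 2 ≤ k → ∀ j : ℕ, 1 ≤ j → j < S (k - 2) →
      (0 < c (S (k - 1) + j) ↔ 0 < c j))
    (hopp : ∀ k : ℤ, 2 ≤ k → (0 < c (S k) ↔ c (S (k - 2)) < 0))
    (D : ℤ → Set ℝ) (hDdef : ∀ k : ℤ, D k = Set.uIcc 0 (c (S k))) :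
    ∀ k : ℤ, 1 ≤ k →
      Set.InjOn (T^[S (k - 1)]) (D k) ∧
      T^[S (k - 1)] '' D k = D (k - 1) ∪ D (k + 1) ∧
      D (k - 1) ∩ D (k + 1) = {(0 : ℝ)} ∧
      lam ^ S (k - 1) * intervalLength (D k)
        = intervalLength (D (k - 1)) + intervalLength (D (k + 1)) ∧
      lam ^ S (k - 1)
        = intervalLength (D (k - 1)) / intervalLength (D k)
          + 1 / (intervalLength (D k) / intervalLength (D (k + 1))) := by
  intro k hk
  obtain rfl : T = tent lam := funext hT
  obtain ⟨s, hs, hfx⟩ :=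
    exists_iterate_tent_eqOn_affine_uIcc_fibonacci (by linarith) hc hcne hsame hk
  have hb_affine : c (S (k + 1)) = c (S (k - 1)) + s * c (S k) := by
    calc c (S (k + 1)) = (tent lam)^[S (k - 1)] (c (S k)) := by
          rw [hc, hc, fibonacci_add_one hSrec (by omega), add_comm, Function.iterate_add_apply]
      _ = _ := hfx right_mem_uIcc
  have hsign : c (S (k - 1)) * c (S (k + 1)) ≤ 0 := by
    refine mul_nonpos_of_pos_iff_neg (hcne _ (one_le_fibonacci hSrec hSm1 (by omega))) ?_
    simpa [show k + 1 - 2 = k - 1 by ring] using hopp (k + 1) (by omega)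
  have hlength : lam ^ S (k - 1) * |c (S k)| = |c (S (k - 1))| + |c (S (k + 1))| := by
    rw [← hs, ← abs_mul, ← abs_sub_eq_abs_add_abs_of_mul_nonpos hsign, hb_affine,
      add_sub_cancel_left]
  have hs0 : s ≠ 0 := abs_pos.1 (hs ▸ pow_pos (by linarith) _)
  have hck : |c (S k)| ≠ 0 := abs_ne_zero.2 (hcne _ (one_le_fibonacci hSrec hSm1 (by omega)))
  simp only [hDdef, intervalLength_uIcc_zero]
  refine ⟨?_, ?_, uIcc_zero_inter_uIcc_zero_of_mul_nonpos hsign, hlength, ?_⟩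
  · exact ((add_right_injective _).comp (mul_right_injective₀ hs0)).injOn.congr hfx.symm
  · rw [hfx.image_eq, image_affine_uIcc_zero, ← hb_affine,
      uIcc_eq_uIcc_zero_union_of_mul_nonpos hsign]
  · field_simp
    linarith

theorem image_of_Dk_under_fibonacci_iterate
    (lam : ℝ) (hlam1 : 1 < lam) (hlam2 : lam ≤ 2)
    (T : ℝ → ℝ) (hT : ∀ x : ℝ, T x = lam * (1 - |x|) - 1)
    (c : ℕ → ℝ) (hc : ∀ i : ℕ, c i = T^[i] 0)
    (S : ℤ → ℕ) (hSm2 : S (-2) = 0) (hSm1 : S (-1) = 1)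
    (hSrec : ∀ k : ℤ, 0 ≤ k → S k = S (k - 1) + S (k - 2))
    (hcne : ∀ j : ℕ, 1 ≤ j → c j ≠ 0)
    (hc2neg : c 2 < 0) (hc1pos : 0 < c 1)
    (hsame : ∀ k : ℤ, 2 ≤ k → ∀ j : ℕ, 1 ≤ j → j < S (k - 2) →
      (0 < c (S (k - 1) + j) ↔ 0 < c j))
    (hopp : ∀ k : ℤ, 2 ≤ k → (0 < c (S k) ↔ c (S (k - 2)) < 0))
    (hdec : ∀ k : ℤ, 0 ≤ k → |c (S (k + 1))| < |c (S k)|)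
    (hc34 : |c 3| < |c 4|)
    (D : ℤ → Set ℝ) (hDdef : ∀ k : ℤ, D k = Set.uIcc 0 (c (S k))) :
    ∀ k : ℤ, 1 ≤ k →
      Set.InjOn (T^[S (k - 1)]) (D k) ∧
      T^[S (k - 1)] '' D k = D (k - 1) ∪ D (k + 1) ∧
      D (k - 1) ∩ D (k + 1) = {(0 : ℝ)} ∧
      lam ^ S (k - 1) * intervalLength (D k)
        = intervalLength (D (k - 1)) + intervalLength (D (k + 1)) ∧
      lam ^ S (k - 1)
        = intervalLength (D (k - 1)) / intervalLength (D k)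
          + 1 / (intervalLength (D k) / intervalLength (D (k + 1))) :=
  image_of_Dk_under_fibonacci_iterate_general lam hlam1 T hT c hc S hSm1 hSrec hcne hsame hopp D
    hDdef
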